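/- arXiv:math/0411433 — 5 statements merged into one kernel-verified Lean document; each statement's English description precedes it below -/
import Mathlib

section
/- Let M and N be closed subspaces of a Hilbert space H. Then sin(M,N) = dist(S, N), where S is the unit sphere of the subspace M̃ = M ⊖ (M ∩ N), i.e., sin(M,N) = inf{dist(x,N) : x ∈ M ∩ (M∩N)^⊥, ‖x‖ = 1} (with the convention that the infimum over the empty set is 1). -/
/-!
Let `P` be the orthogonal projection onto `N`. For `x ∈ M̃` the projection `P x` again lies in
`Ñ`, and for `y ∈ N` one has `⟨x, y⟩ = ⟨P x, y⟩`; so the supremum of `|⟨x, y⟩|` over unit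
`y ∈ Ñ` is `‖P x‖`, attained at `y = P x / ‖P x‖` when `P x ≠ 0`. Hence `c(M,N) = sup ‖P x‖`
over the unit sphere of `M̃`. By Pythagoras `dist(x, N)² = 1 - ‖P x‖²` there, and
`a ↦ √(1 - a²)` is continuous and decreasing on `[0, ∞)`, so it turns this supremum into the
infimum of the distances.
-/

open ContinuousLinearMap

variable {H : Type*} [NormedAddCommGroup H] [InnerProductSpace ℂ H] [CompleteSpace H]

/-- Cosine of the angle between two subspaces. -/
noncomputable def cosAngle (M N : Submodule ℂ H) : ℝ :=
  sSup {r : ℝ | ∃ x ∈ M ⊓ (M ⊓ N)ᗮ, ∃ y ∈ N ⊓ (M ⊓ N)ᗮ,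
    ‖x‖ = 1 ∧ ‖y‖ = 1 ∧ r = ‖(inner ℂ x y : ℂ)‖}

/-- Sine of the angle: `s(M,N) = (1 - c(M,N)²)^{1/2}`. -/
noncomputable def sinAngle (M N : Submodule ℂ H) : ℝ :=
  Real.sqrt (1 - cosAngle M N ^ 2)

namespace Submodule

variable {𝕜 E : Type*} [RCLike 𝕜] [NormedAddCommGroup E] [InnerProductSpace 𝕜 E]
  (K : Submodule 𝕜 E) [K.HasOrthogonalProjection]

theorem infDist_eq_norm_sub_starProjection (x : E) :
    Metric.infDist x K = ‖x - K.starProjection x‖ := by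
  rw [Metric.infDist_eq_iInf, starProjection_minimal]
  simp only [dist_eq_norm]
  rfl

theorem infDist_eq_sqrt_norm_sq_sub_norm_starProjection_sq (x : E) :
    Metric.infDist x K = √(‖x‖ ^ 2 - ‖K.starProjection x‖ ^ 2) := by
  rw [infDist_eq_norm_sub_starProjection, K.norm_sq_eq_add_norm_sq_starProjection x,
    starProjection_orthogonal_val, add_sub_cancel_left, Real.sqrt_sq (norm_nonneg _)]

theorem inner_starProjection_left_of_mem_right {x y : E} (hy : y ∈ K) :
    inner 𝕜 (K.starProjection x) y = inner 𝕜 x y := by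
  rw [inner_starProjection_left_eq_right, starProjection_eq_self_iff.mpr hy]

theorem starProjection_mem_orthogonal_of_le {L : Submodule 𝕜 E} (hLK : L ≤ K) {x : E}
    (hx : x ∈ Lᗮ) : K.starProjection x ∈ Lᗮ := by
  intro u hu
  rw [← inner_conj_symm, K.inner_starProjection_left_of_mem_right (hLK hu),
    inner_conj_symm, hx u hu]

theorem norm_inner_le_norm_starProjection_mul {x y : E} (hy : y ∈ K) :
    ‖inner 𝕜 x y‖ ≤ ‖K.starProjection x‖ * ‖y‖ := by
  rw [← K.inner_starProjection_left_of_mem_right hy]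
  exact norm_inner_le_norm _ _

theorem norm_inner_normalize_starProjection (x : E) :
    ‖inner 𝕜 x ((‖K.starProjection x‖⁻¹ : 𝕜) • K.starProjection x)‖ = ‖K.starProjection x‖ := by
  rw [inner_smul_right, ← K.inner_starProjection_left_of_mem_right (K.starProjection_apply_mem x),
    inner_self_eq_norm_sq_to_K, norm_mul, norm_inv, norm_pow, RCLike.norm_ofReal, abs_norm]
  rcases eq_or_ne ‖K.starProjection x‖ 0 with h | h
  · simp [h]
  · field_simp

theorem bddAbove_norm_starProjection_image_inter_sphere (s : Set E) :
    BddAbove ((fun x ↦ ‖K.starProjection x‖) '' (s ∩ Metric.sphere 0 1)) := by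
  refine ⟨1, ?_⟩
  rintro _ ⟨x, ⟨-, hx⟩, rfl⟩
  exact (K.norm_starProjection_apply_le x).trans (mem_sphere_zero_iff_norm.1 hx).le

end Submodule

theorem Real.sqrt_one_sub_sSup_sq {A : Set ℝ} (hA : A.Nonempty) (hbdd : BddAbove A)
    (hA_nonneg : ∀ a ∈ A, 0 ≤ a) :
    √(1 - sSup A ^ 2) = sInf ((fun a ↦ √(1 - a ^ 2)) '' A) := by
  refine AntitoneOn.map_csSup_of_continuousWithinAt
    (by fun_prop : Continuous fun a : ℝ ↦ √(1 - a ^ 2)).continuousWithinAt ?_ hA hbdd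
  intro a ha b _ hab
  have ha0 := hA_nonneg a ha
  dsimp only
  gcongr

theorem Submodule.setOf_exists_mem_norm_eq_one_eq_image {R E : Type*} [Semiring R]
    [SeminormedAddCommGroup E] [Module R E] (K : Submodule R E) (f : E → ℝ) :
    {r : ℝ | ∃ x ∈ K, ‖x‖ = 1 ∧ r = f x} = f '' ((K : Set E) ∩ Metric.sphere 0 1) := by
  ext r
  simp only [Set.mem_ofPred_eq, Set.mem_image, Set.mem_inter_iff, SetLike.mem_coe,
    mem_sphere_zero_iff_norm, and_assoc, eq_comm]

open Submodule in
theorem cosAngle_eq_sSup_norm_starProjection {E : Type*} [NormedAddCommGroup E]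
    [InnerProductSpace ℂ E] (M N : Submodule ℂ E) [N.HasOrthogonalProjection] :
    cosAngle M N = sSup ((fun x ↦ ‖N.starProjection x‖) ''
      ((M ⊓ (M ⊓ N)ᗮ : Submodule ℂ E) ∩ Metric.sphere 0 1)) := by
  set A := (fun x ↦ ‖N.starProjection x‖) '' ((M ⊓ (M ⊓ N)ᗮ : Submodule ℂ E) ∩ Metric.sphere 0 1)
  have hA_nonneg : 0 ≤ sSup A := Real.sSup_nonneg (by rintro _ ⟨x, -, rfl⟩; exact norm_nonneg _)
  have hA_bdd : BddAbove A := N.bddAbove_norm_starProjection_image_inter_sphere _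
  have hC_nonneg : 0 ≤ cosAngle M N :=
    Real.sSup_nonneg (by rintro _ ⟨x, -, y, -, -, -, rfl⟩; exact norm_nonneg _)
  have hC_bdd : BddAbove {r : ℝ | ∃ x ∈ M ⊓ (M ⊓ N)ᗮ, ∃ y ∈ N ⊓ (M ⊓ N)ᗮ,
      ‖x‖ = 1 ∧ ‖y‖ = 1 ∧ r = ‖(inner ℂ x y : ℂ)‖} := by
    refine ⟨1, ?_⟩
    rintro _ ⟨x, -, y, -, hx, hy, rfl⟩
    simpa [hx, hy] using norm_inner_le_norm (𝕜 := ℂ) x y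
  apply le_antisymm
  · refine Real.sSup_le ?_ hA_nonneg
    rintro _ ⟨x, hx, y, hy, hx1, hy1, rfl⟩
    calc ‖(inner ℂ x y : ℂ)‖ ≤ ‖N.starProjection x‖ * ‖y‖ :=
          N.norm_inner_le_norm_starProjection_mul hy.1
      _ = ‖N.starProjection x‖ := by rw [hy1, mul_one]
      _ ≤ sSup A := le_csSup hA_bdd ⟨x, ⟨hx, mem_sphere_zero_iff_norm.2 hx1⟩, rfl⟩
  · refine Real.sSup_le ?_ hC_nonneg
    rintro _ ⟨x, ⟨hx, hx1⟩, rfl⟩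
    by_cases hP : N.starProjection x = 0
    · simpa [hP] using hC_nonneg
    refine le_csSup hC_bdd ⟨x, hx, _, ?_, mem_sphere_zero_iff_norm.1 hx1, norm_smul_inv_norm hP,
      (N.norm_inner_normalize_starProjection x).symm⟩
    exact smul_mem _ _ ⟨N.starProjection_apply_mem x,
      N.starProjection_mem_orthogonal_of_le inf_le_right (mem_inf.1 hx).2⟩

theorem stmt1_general (M N : Submodule ℂ H) (hN : IsClosed (N : Set H)) :
    (({r : ℝ | ∃ x ∈ M ⊓ (M ⊓ N)ᗮ, ‖x‖ = 1 ∧ r = Metric.infDist x (N : Set H)}).Nonempty →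
      sinAngle M N
        = sInf {r : ℝ | ∃ x ∈ M ⊓ (M ⊓ N)ᗮ, ‖x‖ = 1 ∧ r = Metric.infDist x (N : Set H)})
    ∧ ({r : ℝ | ∃ x ∈ M ⊓ (M ⊓ N)ᗮ, ‖x‖ = 1 ∧ r = Metric.infDist x (N : Set H)} = ∅ →
      sinAngle M N = 1) := by
  have : CompleteSpace N := hN.completeSpace_coe
  set S := ((M ⊓ (M ⊓ N)ᗮ : Submodule ℂ H) : Set H) ∩ Metric.sphere 0 1
  have hdist : (Metric.infDist · (N : Set H)) '' S
      = (fun a ↦ √(1 - a ^ 2)) '' ((fun x ↦ ‖N.starProjection x‖) '' S) := by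
    rw [Set.image_image]
    refine Set.image_congr fun x hx ↦ ?_
    rw [N.infDist_eq_sqrt_norm_sq_sub_norm_starProjection_sq, mem_sphere_zero_iff_norm.1 hx.2,
      one_pow]
  rw [Submodule.setOf_exists_mem_norm_eq_one_eq_image, hdist, sinAngle,
    cosAngle_eq_sSup_norm_starProjection]
  refine ⟨fun hne ↦ Real.sqrt_one_sub_sSup_sq hne.of_image
    (N.bddAbove_norm_starProjection_image_inter_sphere _) ?_, fun hemp ↦ ?_⟩
  · rintro _ ⟨x, -, rfl⟩
    exact norm_nonneg _
  · rw [Set.image_eq_empty.1 hemp]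
    simp

/-- `sin(M,N) = inf {dist(x,N) : x ∈ M ∩ (M∩N)^⊥, ‖x‖ = 1}`, with the convention that the
infimum over the empty set is `1`. -/
theorem stmt1 (M N : Submodule ℂ H) (hM : IsClosed (M : Set H)) (hN : IsClosed (N : Set H)) :
    (({r : ℝ | ∃ x ∈ M ⊓ (M ⊓ N)ᗮ, ‖x‖ = 1 ∧ r = Metric.infDist x (N : Set H)}).Nonempty →
      sinAngle M N
        = sInf {r : ℝ | ∃ x ∈ M ⊓ (M ⊓ N)ᗮ, ‖x‖ = 1 ∧ r = Metric.infDist x (N : Set H)})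
    ∧ ({r : ℝ | ∃ x ∈ M ⊓ (M ⊓ N)ᗮ, ‖x‖ = 1 ∧ r = Metric.infDist x (N : Set H)} = ∅ →
      sinAngle M N = 1) :=
  stmt1_general M N hN
end

section
/- Let T ∈ L(H) with closed range and B ∈ L(H) with closed range such that R(T) ⊆ N(B)^⊥. Then γ(B) γ(T) ≤ γ(BT) ≤ ‖B‖ γ(T). -/
/-!
Since `R(T) ⊆ N(B)^⊥`, `N(BT) = N(T)`, so `γ(BT)` and `γ(T)` are infima over the same unit sphere
of `N(T)^⊥`. Both bounds then follow from the pointwise estimates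
`γ(B) ‖Tx‖ ≤ ‖BTx‖ ≤ ‖B‖ ‖Tx‖`, the first because `Tx ∈ N(B)^⊥`.
-/

open ContinuousLinearMap

variable {H : Type*} [NormedAddCommGroup H] [InnerProductSpace ℂ H] [CompleteSpace H]

/-- The reduced minimum modulus `γ(T) = inf {‖Tx‖ : ‖x‖ = 1, x ∈ N(T)^⊥}`. -/
noncomputable def gamma (T : H →L[ℂ] H) : ℝ :=
  sInf {r : ℝ | ∃ x ∈ (LinearMap.ker (T : H →ₗ[ℂ] H))ᗮ, ‖x‖ = 1 ∧ r = ‖T x‖}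

section

omit [CompleteSpace H]

lemma gamma_nonneg (T : H →L[ℂ] H) : 0 ≤ gamma T :=
  Real.sInf_nonneg (by rintro r ⟨x, -, -, rfl⟩; exact norm_nonneg _)

lemma gamma_le_norm_apply (T : H →L[ℂ] H) {x : H}
    (hx : x ∈ (LinearMap.ker (T : H →ₗ[ℂ] H))ᗮ) (hx1 : ‖x‖ = 1) : gamma T ≤ ‖T x‖ :=
  csInf_le ⟨0, by rintro r ⟨y, -, -, rfl⟩; exact norm_nonneg _⟩ ⟨x, hx, hx1, rfl⟩

lemma gamma_mul_norm_le_norm_apply (T : H →L[ℂ] H) {x : H}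
    (hx : x ∈ (LinearMap.ker (T : H →ₗ[ℂ] H))ᗮ) : gamma T * ‖x‖ ≤ ‖T x‖ := by
  rcases eq_or_ne x 0 with rfl | hx0
  · simp
  have hpos : 0 < ‖x‖ := norm_pos_iff.2 hx0
  have hunit : ‖((‖x‖ : ℂ))⁻¹ • x‖ = 1 := by
    rw [norm_smul, norm_inv, Complex.norm_real, Real.norm_of_nonneg hpos.le,
      inv_mul_cancel₀ hpos.ne']
  have h := gamma_le_norm_apply T (Submodule.smul_mem _ _ hx) hunit
  rw [map_smul, norm_smul, norm_inv, Complex.norm_real, Real.norm_of_nonneg hpos.le,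
    le_inv_mul_iff₀ hpos] at h
  linarith

lemma gamma_eq_iInf_of_ker_eq {S T : H →L[ℂ] H}
    (h : LinearMap.ker (S : H →ₗ[ℂ] H) = LinearMap.ker (T : H →ₗ[ℂ] H)) :
    gamma S = ⨅ x : {x : H // x ∈ (LinearMap.ker (T : H →ₗ[ℂ] H))ᗮ ∧ ‖x‖ = 1}, ‖S x‖ := by
  rw [gamma, h, iInf]
  congr 1
  ext r
  simp [eq_comm, and_assoc]

lemma ker_comp_eq_of_range_le_orthogonal_ker {T B : H →L[ℂ] H}
    (hTB : LinearMap.range (T : H →ₗ[ℂ] H) ≤ (LinearMap.ker (B : H →ₗ[ℂ] H))ᗮ) :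
    LinearMap.ker ((B ∘L T) : H →ₗ[ℂ] H) = LinearMap.ker (T : H →ₗ[ℂ] H) := by
  ext x
  refine ⟨fun hx => ?_, fun hx => by simp_all⟩
  have hBTx : T x ∈ LinearMap.ker (B : H →ₗ[ℂ] H) := hx
  simpa using (Submodule.orthogonal_disjoint _).le_bot ⟨hBTx, hTB ⟨x, rfl⟩⟩

end

theorem stmt4_general (T B : H →L[ℂ] H)
    (hTB : LinearMap.range (T : H →ₗ[ℂ] H) ≤ (LinearMap.ker (B : H →ₗ[ℂ] H))ᗮ) :
    gamma B * gamma T ≤ gamma (B ∘L T) ∧ gamma (B ∘L T) ≤ ‖B‖ * gamma T := by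
  rw [gamma_eq_iInf_of_ker_eq (ker_comp_eq_of_range_le_orthogonal_ker hTB),
    gamma_eq_iInf_of_ker_eq (S := T) rfl, Real.mul_iInf_of_nonneg (gamma_nonneg B),
    Real.mul_iInf_of_nonneg (norm_nonneg B)]
  constructor
  · exact ciInf_mono
      ⟨0, Set.forall_mem_range.2 fun x => mul_nonneg (gamma_nonneg B) (norm_nonneg _)⟩
      fun x => gamma_mul_norm_le_norm_apply B (hTB ⟨x, rfl⟩)
  · exact ciInf_mono ⟨0, Set.forall_mem_range.2 fun x => by positivity⟩
      fun x => B.le_opNorm (T x)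

/-- If `T` and `B` have closed range and `R(T) ⊆ N(B)^⊥`, then
`γ(B) γ(T) ≤ γ(BT) ≤ ‖B‖ γ(T)`. -/
theorem stmt4 (T B : H →L[ℂ] H)
    (hT : IsClosed ((LinearMap.range (T : H →ₗ[ℂ] H) : Submodule ℂ H) : Set H))
    (hB : IsClosed ((LinearMap.range (B : H →ₗ[ℂ] H) : Submodule ℂ H) : Set H))
    (hTB : LinearMap.range (T : H →ₗ[ℂ] H) ≤ (LinearMap.ker (B : H →ₗ[ℂ] H))ᗮ) :
    gamma B * gamma T ≤ gamma (B ∘L T) ∧ gamma (B ∘L T) ≤ ‖B‖ * gamma T :=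
  stmt4_general T B hTB
end

section
/- Let P_R and P_M be orthogonal projections onto closed subspaces R and M of a Hilbert space. Then the kernel of P_R P_M is M^⊥ ⊕ (M ∩ R^⊥), and hence N(P_R P_M)^⊥ = M ∩ (M ∩ R^⊥)^⊥. -/
open ContinuousLinearMap

variable {H : Type*} [NormedAddCommGroup H] [InnerProductSpace ℂ H] [CompleteSpace H]

theorem LinearMap.ker_comp_of_isIdempotentElem {R M N : Type*} [Ring R] [AddCommGroup M]
    [Module R M] [AddCommGroup N] [Module R N] {P : M →ₗ[R] M} (hP : IsIdempotentElem P)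
    (Q : M →ₗ[R] N) : ker (Q ∘ₗ P) = ker P ⊔ (range P ⊓ ker Q) := by
  ext x
  constructor
  · intro hx
    have hPx : P (P x) = P x := congr($hP x)
    rw [← sub_add_cancel x (P x)]
    exact Submodule.add_mem_sup (by simp [hPx]) ⟨mem_range_self P x, hx⟩
  · intro hx
    obtain ⟨a, ha, b, ⟨hb, hQb⟩, rfl⟩ := Submodule.mem_sup.mp hx
    rw [mem_ker, comp_apply, map_add, mem_ker.mp ha, zero_add,
      (IsIdempotentElem.mem_range_iff hP).mp hb, hQb]

theorem stmt7_general (R M : Submodule ℂ H) (hM : IsClosed (M : Set H))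
    (PR PM : H →L[ℂ] H)
    (hPR2 : IsSelfAdjoint PR) (hPR3 : LinearMap.range (PR : H →ₗ[ℂ] H) = R)
    (hPM1 : PM ∘L PM = PM) (hPM2 : IsSelfAdjoint PM) (hPM3 : LinearMap.range (PM : H →ₗ[ℂ] H) = M) :
    LinearMap.ker ((PR ∘L PM : H →L[ℂ] H) : H →ₗ[ℂ] H) = Mᗮ ⊔ (M ⊓ Rᗮ)
    ∧ (LinearMap.ker ((PR ∘L PM : H →L[ℂ] H) : H →ₗ[ℂ] H))ᗮ = M ⊓ (M ⊓ Rᗮ)ᗮ := by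
  have hkerR : LinearMap.ker (PR : H →ₗ[ℂ] H) = Rᗮ :=
    hPR3 ▸ hPR2.isStarNormal.orthogonal_range.symm
  have hkerM : LinearMap.ker (PM : H →ₗ[ℂ] H) = Mᗮ :=
    hPM3 ▸ hPM2.isStarNormal.orthogonal_range.symm
  have hPM : IsIdempotentElem (PM : H →ₗ[ℂ] H) := congrArg ContinuousLinearMap.toLinearMap hPM1
  have hker : LinearMap.ker ((PR ∘L PM : H →L[ℂ] H) : H →ₗ[ℂ] H) = Mᗮ ⊔ (M ⊓ Rᗮ) := by
    rw [toLinearMap_comp, LinearMap.ker_comp_of_isIdempotentElem hPM, hkerM, hPM3, hkerR]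
  refine ⟨hker, ?_⟩
  rw [hker, ← Submodule.inf_orthogonal, Submodule.orthogonal_orthogonal_eq_closure,
    hM.submodule_topologicalClosure_eq]

/-- `N(P_R P_M) = M^⊥ ⊕ (M ∩ R^⊥)` and hence `N(P_R P_M)^⊥ = M ∩ (M ∩ R^⊥)^⊥`. -/
theorem stmt7 (R M : Submodule ℂ H) (hR : IsClosed (R : Set H)) (hM : IsClosed (M : Set H))
    (PR PM : H →L[ℂ] H)
    (hPR1 : PR ∘L PR = PR) (hPR2 : IsSelfAdjoint PR) (hPR3 : LinearMap.range (PR : H →ₗ[ℂ] H) = R)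
    (hPM1 : PM ∘L PM = PM) (hPM2 : IsSelfAdjoint PM) (hPM3 : LinearMap.range (PM : H →ₗ[ℂ] H) = M) :
    LinearMap.ker ((PR ∘L PM : H →L[ℂ] H) : H →ₗ[ℂ] H) = Mᗮ ⊔ (M ⊓ Rᗮ)
    ∧ (LinearMap.ker ((PR ∘L PM : H →L[ℂ] H) : H →ₗ[ℂ] H))ᗮ = M ⊓ (M ⊓ Rᗮ)ᗮ :=
  stmt7_general R M hM PR PM hPR2 hPR3 hPM1 hPM2 hPM3
end

section
/- Let P and Q be orthogonal projections on a Hilbert space H. Then for every k ≥ 1, ‖(PQ)^k − P∧Q‖ = c(R(P), R(Q))^{2k−1}, where P∧Q is the orthogonal projection onto R(P) ∩ R(Q) and c denotes the cosine of the angle between the ranges. -/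
/-!
Write `E = P ∧ Q`. Since `E ≤ P` and `E ≤ Q`, the differences `P - E` and `Q - E` are the
orthogonal projections onto `R(P) ⊖ (R(P) ∩ R(Q))` and `R(Q) ⊖ (R(P) ∩ R(Q))`, and
`(PQ)^k - E = ((P - E)(Q - E))^k` because `E` is absorbed by every factor. For orthogonal
projections `p, q` the C⋆-identity gives `‖(pq)^k‖² = ‖(qp)^k (pq)^k‖ = ‖(qpq)^(2k-1)‖`, and
`qpq = (pq)⋆(pq)` is self-adjoint, so this equals `‖qpq‖^(2k-1) = ‖pq‖^(2(2k-1))`. Finally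
`‖pq‖` is the supremum of `|⟪x, y⟫|` over unit vectors `x ∈ R(p)`, `y ∈ R(q)`.
-/

open ContinuousLinearMap

variable {H : Type*} [NormedAddCommGroup H] [InnerProductSpace ℂ H] [CompleteSpace H]

section Monoid

variable {M : Type*} [Monoid M]

theorem mul_pow_succ_eq_mul_pow_mul (a b : M) (n : ℕ) :
    (a * b) ^ (n + 1) = a * (b * a) ^ n * b := by
  rw [pow_succ, ← mul_assoc, mul_pow_mul]

theorem IsIdempotentElem.mul_pow_succ_eq_pow_succ_mul {p q : M} (hq : IsIdempotentElem q)
    (n : ℕ) : (q * p * q) ^ (n + 1) = (q * p) ^ (n + 1) * q := by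
  induction n with
  | zero => simp
  | succ n ih =>
    rw [pow_succ, ih, pow_succ (q * p) (n + 1)]
    simp only [mul_assoc]
    rw [← mul_assoc q q, hq.eq]

theorem IsIdempotentElem.pow_succ_mul_pow_succ {p q : M} (hp : IsIdempotentElem p)
    (hq : IsIdempotentElem q) (n : ℕ) :
    (q * p) ^ (n + 1) * (p * q) ^ (n + 1) = (q * p * q) ^ (2 * n + 1) := by
  have hqpp : (q * p) ^ (n + 1) * p = (q * p) ^ (n + 1) := by
    rw [pow_succ, mul_assoc, mul_assoc, hp.eq]
  rw [hq.mul_pow_succ_eq_pow_succ_mul, mul_pow_succ_eq_mul_pow_mul p q, ← mul_assoc,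
    ← mul_assoc, hqpp, ← pow_add, show n + 1 + n = 2 * n + 1 by ring]

end Monoid

theorem add_pow_succ_of_mul_eq_zero {R : Type*} [Semiring R] {t e : R}
    (he : IsIdempotentElem e) (hte : t * e = 0) (het : e * t = 0) (n : ℕ) :
    (t + e) ^ (n + 1) = t ^ (n + 1) + e := by
  induction n with
  | zero => simp
  | succ n ih =>
    have htne : t ^ (n + 1) * e = 0 := by rw [pow_succ, mul_assoc, hte, mul_zero]
    rw [pow_succ, ih, add_mul, mul_add, mul_add, htne, het, he.eq, ← pow_succ, add_zero, zero_add]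

section StarRing

variable {R : Type*} [Ring R] [StarRing R]

theorem IsSelfAdjoint.mul_eq_left_of_mul_eq_right {p e : R} (hp : IsSelfAdjoint p)
    (he : IsSelfAdjoint e) (h : p * e = e) : e * p = e := by
  simpa [star_mul, hp.star_eq, he.star_eq] using congr(star $h)

theorem IsStarProjection.mul_pow_succ_sub {p q e : R} (he : IsStarProjection e)
    (hp : IsSelfAdjoint p) (hq : IsSelfAdjoint q) (hpe : p * e = e) (hqe : q * e = e)
    (n : ℕ) : (p * q) ^ (n + 1) - e = ((p - e) * (q - e)) ^ (n + 1) := by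
  have hep : e * p = e := hp.mul_eq_left_of_mul_eq_right he.isSelfAdjoint hpe
  have heq : e * q = e := hq.mul_eq_left_of_mul_eq_right he.isSelfAdjoint hqe
  have hdecomp : p * q = (p - e) * (q - e) + e := by
    simp only [sub_mul, mul_sub, hpe, heq, he.isIdempotentElem.eq]; abel
  rw [hdecomp, add_pow_succ_of_mul_eq_zero he.isIdempotentElem, add_sub_cancel_right]
  · rw [mul_assoc, sub_mul q, hqe, he.isIdempotentElem.eq, sub_self, mul_zero]
  · rw [← mul_assoc, mul_sub e p, hep, he.isIdempotentElem.eq, sub_self, zero_mul]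

end StarRing

section CStarRing

variable {A : Type*} [NormedRing A] [StarRing A] [CStarRing A]

/-- The C⋆-identity gives this for powers of two; a general `n` lies below `2 ^ n`. -/
theorem IsSelfAdjoint.norm_pow {a : A} (ha : IsSelfAdjoint a) {n : ℕ} (hn : n ≠ 0) :
    ‖a ^ n‖ = ‖a‖ ^ n := by
  rcases eq_or_ne a 0 with rfl | ha0
  · simp [zero_pow hn]
  refine le_antisymm (norm_pow_le' a (Nat.pos_of_ne_zero hn)) ?_
  have hlt : n < 2 ^ n := Nat.lt_two_pow_self
  have key : ‖a‖ ^ n * ‖a‖ ^ (2 ^ n - n) ≤ ‖a ^ n‖ * ‖a‖ ^ (2 ^ n - n) :=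
    calc ‖a‖ ^ n * ‖a‖ ^ (2 ^ n - n) = ‖a ^ 2 ^ n‖ := by
          rw [← pow_add, Nat.add_sub_cancel' hlt.le, ha.norm_pow_two_pow]
      _ = ‖a ^ n * a ^ (2 ^ n - n)‖ := by rw [← pow_add, Nat.add_sub_cancel' hlt.le]
      _ ≤ ‖a ^ n‖ * ‖a ^ (2 ^ n - n)‖ := norm_mul_le _ _
      _ ≤ ‖a ^ n‖ * ‖a‖ ^ (2 ^ n - n) := by
          gcongr; exact norm_pow_le' a (Nat.sub_pos_of_lt hlt)
  exact le_of_mul_le_mul_right key (pow_pos (norm_pos_iff.mpr ha0) _)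

theorem IsStarProjection.norm_mul_pow_succ {p q : A} (hp : IsStarProjection p)
    (hq : IsStarProjection q) (n : ℕ) :
    ‖(p * q) ^ (n + 1)‖ = ‖p * q‖ ^ (2 * n + 1) := by
  have hstar : star (p * q) = q * p := by
    rw [star_mul, hp.isSelfAdjoint.star_eq, hq.isSelfAdjoint.star_eq]
  have hqpq : q * p * q = star (p * q) * (p * q) := by
    rw [hstar, ← mul_assoc, mul_assoc q p p, hp.isIdempotentElem.eq]
  have hsa : IsSelfAdjoint (q * p * q) := by
    rw [hqpq]; exact .star_mul_self _
  have hsq : ‖(p * q) ^ (n + 1)‖ ^ 2 = (‖p * q‖ ^ (2 * n + 1)) ^ 2 :=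
    calc ‖(p * q) ^ (n + 1)‖ ^ 2 = ‖star ((p * q) ^ (n + 1)) * (p * q) ^ (n + 1)‖ := by
          rw [CStarRing.norm_star_mul_self, sq]
      _ = ‖(q * p * q) ^ (2 * n + 1)‖ := by
          rw [star_pow, hstar, hp.isIdempotentElem.pow_succ_mul_pow_succ hq.isIdempotentElem]
      _ = ‖q * p * q‖ ^ (2 * n + 1) := hsa.norm_pow (Nat.succ_ne_zero _)
      _ = (‖p * q‖ ^ (2 * n + 1)) ^ 2 := by
          rw [hqpq, CStarRing.norm_star_mul_self, ← sq, ← pow_mul, ← pow_mul, mul_comm]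
  exact (pow_left_inj₀ (norm_nonneg _) (by positivity) two_ne_zero).mp hsq

end CStarRing

namespace ContinuousLinearMap.IsIdempotentElem

variable {R M : Type*} [Semiring R] [TopologicalSpace M] [AddCommMonoid M] [Module R M]
  {p : M →L[R] M}

theorem mem_range_iff (hp : IsIdempotentElem p) {x : M} : x ∈ p.range ↔ p x = x :=
  LinearMap.IsIdempotentElem.mem_range_iff hp.toLinearMap

theorem apply_apply (hp : IsIdempotentElem p) (x : M) : p (p x) = p x :=
  DFunLike.congr_fun hp.eq x

theorem mul_eq_right_of_range_le (hp : IsIdempotentElem p) {e : M →L[R] M}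
    (h : e.range ≤ p.range) : p * e = e :=
  ContinuousLinearMap.ext fun x => hp.mem_range_iff.mp (h (LinearMap.mem_range_self _ x))

end ContinuousLinearMap.IsIdempotentElem

section InnerProductSpace

variable {𝕜 E : Type*} [RCLike 𝕜] [NormedAddCommGroup E] [InnerProductSpace 𝕜 E]

noncomputable def cosDixmierAngle (M N : Submodule 𝕜 E) : ℝ :=
  sSup {r : ℝ | ∃ x ∈ M, ∃ y ∈ N, ‖x‖ = 1 ∧ ‖y‖ = 1 ∧ r = ‖(inner 𝕜 x y : 𝕜)‖}

theorem cosDixmierAngle_nonneg (M N : Submodule 𝕜 E) : 0 ≤ cosDixmierAngle M N :=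
  Real.sSup_nonneg (by rintro r ⟨x, -, y, -, -, -, rfl⟩; exact norm_nonneg _)

theorem cosDixmierAngle_le {M N : Submodule 𝕜 E} {c : ℝ} (hc : 0 ≤ c)
    (h : ∀ x ∈ M, ∀ y ∈ N, ‖x‖ = 1 → ‖y‖ = 1 → ‖(inner 𝕜 x y : 𝕜)‖ ≤ c) :
    cosDixmierAngle M N ≤ c :=
  Real.sSup_le (by rintro r ⟨x, hx, y, hy, hx1, hy1, rfl⟩; exact h x hx y hy hx1 hy1) hc

theorem norm_inner_le_cosDixmierAngle_mul {M N : Submodule 𝕜 E} {x y : E} (hx : x ∈ M)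
    (hy : y ∈ N) : ‖(inner 𝕜 x y : 𝕜)‖ ≤ cosDixmierAngle M N * (‖x‖ * ‖y‖) := by
  rcases eq_or_ne x 0 with rfl | hx0
  · simp
  rcases eq_or_ne y 0 with rfl | hy0
  · simp
  have hbdd : BddAbove {r : ℝ | ∃ x ∈ M, ∃ y ∈ N, ‖x‖ = 1 ∧ ‖y‖ = 1 ∧
      r = ‖(inner 𝕜 x y : 𝕜)‖} := by
    refine ⟨1, ?_⟩
    rintro r ⟨x, -, y, -, hx1, hy1, rfl⟩
    simpa [hx1, hy1] using norm_inner_le_norm (𝕜 := 𝕜) x y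
  have hxy : 0 < ‖x‖ * ‖y‖ := by positivity
  have hunit := le_csSup hbdd ⟨(‖x‖⁻¹ : 𝕜) • x, M.smul_mem _ hx, (‖y‖⁻¹ : 𝕜) • y,
    N.smul_mem _ hy, by simp [norm_smul, hx0], by simp [norm_smul, hy0], rfl⟩
  rw [← div_le_iff₀ hxy, cosDixmierAngle]
  refine le_of_eq_of_le ?_ hunit
  simp [inner_smul_left, inner_smul_right]
  ring

variable [CompleteSpace E]

theorem IsStarProjection.norm_mul_eq_cosDixmierAngle {p q : E →L[𝕜] E}
    (hp : IsStarProjection p) (hq : IsStarProjection q) :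
    ‖p * q‖ = cosDixmierAngle p.range q.range := by
  have hsym : ∀ a b, (inner 𝕜 (p a) b : 𝕜) = inner 𝕜 a (p b) := hp.isSelfAdjoint.isSymmetric
  refine le_antisymm (opNorm_le_bound _ (cosDixmierAngle_nonneg _ _) fun z => ?_) ?_
  · set c := cosDixmierAngle p.range q.range
    have hw : ‖q z‖ ≤ ‖z‖ := by simpa using le_of_opNorm_le q hq.norm_le z
    have hsq : ‖p (q z)‖ * ‖p (q z)‖ ≤ ‖p (q z)‖ * (c * ‖z‖) :=
      calc ‖p (q z)‖ * ‖p (q z)‖ = ‖(inner 𝕜 (p (q z)) (q z) : 𝕜)‖ := by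
            rw [← sq, ← inner_self_eq_norm_sq (𝕜 := 𝕜), inner_self_re_eq_norm, ← hsym,
              hp.isIdempotentElem.apply_apply]
        _ ≤ c * (‖p (q z)‖ * ‖q z‖) := norm_inner_le_cosDixmierAngle_mul
            (LinearMap.mem_range_self (p : E →ₗ[𝕜] E) (q z))
            (LinearMap.mem_range_self (q : E →ₗ[𝕜] E) z)
        _ ≤ ‖p (q z)‖ * (c * ‖z‖) := by
            rw [mul_left_comm]; gcongr; exact cosDixmierAngle_nonneg _ _
    change ‖p (q z)‖ ≤ _
    rcases (norm_nonneg (p (q z))).eq_or_lt with h0 | hpos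
    · rw [← h0]; exact mul_nonneg (cosDixmierAngle_nonneg _ _) (norm_nonneg z)
    · exact le_of_mul_le_mul_left hsq hpos
  · refine cosDixmierAngle_le (norm_nonneg _) fun x hx y hy hx1 hy1 => ?_
    have hpx : p x = x := hp.isIdempotentElem.mem_range_iff.mp hx
    have hqy : q y = y := hq.isIdempotentElem.mem_range_iff.mp hy
    calc ‖(inner 𝕜 x y : 𝕜)‖ = ‖(inner 𝕜 x ((p * q) y) : 𝕜)‖ := by
          rw [show (p * q) y = p (q y) from rfl, hqy, ← hsym, hpx]
      _ ≤ ‖x‖ * ‖(p * q) y‖ := norm_inner_le_norm _ _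
      _ ≤ ‖p * q‖ := by simpa [hx1, hy1] using le_opNorm (p * q) y

theorem IsStarProjection.range_sub {p e : E →L[𝕜] E} (hp : IsStarProjection p)
    (he : IsStarProjection e) (hpe : p * e = e) : (p - e).range = p.range ⊓ e.rangeᗮ := by
  have hep : e * p = e := hp.isSelfAdjoint.mul_eq_left_of_mul_eq_right he.isSelfAdjoint hpe
  have hesub : e * (p - e) = 0 := by rw [mul_sub, hep, he.isIdempotentElem.eq, sub_self]
  ext x
  rw [Submodule.mem_inf, (he.sub_of_mul_eq_right hp hpe).isIdempotentElem.mem_range_iff,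
    hp.isIdempotentElem.mem_range_iff, he.isStarNormal.orthogonal_range, LinearMap.mem_ker,
    coe_coe, sub_apply]
  constructor
  · intro h
    have hex : e x = 0 := by rw [← h]; exact DFunLike.congr_fun hesub x
    exact ⟨by rwa [hex, sub_zero] at h, hex⟩
  · rintro ⟨hpx, hex⟩
    rw [hpx, hex, sub_zero]

end InnerProductSpace

/-- Kayalar–Weinert: for orthogonal projections `P, Q`,
`‖(PQ)^k − P∧Q‖ = c(R(P), R(Q))^{2k−1}` for every `k ≥ 1`, where `P∧Q` is the
orthogonal projection onto `R(P) ∩ R(Q)`. -/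
theorem stmt15 (P Q Pmeet : H →L[ℂ] H)
    (hP1 : P ∘L P = P) (hP2 : IsSelfAdjoint P)
    (hQ1 : Q ∘L Q = Q) (hQ2 : IsSelfAdjoint Q)
    (hm1 : Pmeet ∘L Pmeet = Pmeet) (hm2 : IsSelfAdjoint Pmeet)
    (hm3 : LinearMap.range (Pmeet : H →ₗ[ℂ] H) = LinearMap.range (P : H →ₗ[ℂ] H) ⊓ LinearMap.range (Q : H →ₗ[ℂ] H)) :
    ∀ k : ℕ, 1 ≤ k →
      ‖(P * Q) ^ k - Pmeet‖ = cosAngle (LinearMap.range (P : H →ₗ[ℂ] H)) (LinearMap.range (Q : H →ₗ[ℂ] H)) ^ (2 * k - 1) := by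
  intro k hk
  obtain ⟨n, rfl⟩ := Nat.exists_eq_add_of_le' hk
  have hP : IsStarProjection P := ⟨hP1, hP2⟩
  have hQ : IsStarProjection Q := ⟨hQ1, hQ2⟩
  have hE : IsStarProjection Pmeet := ⟨hm1, hm2⟩
  have hPE : P * Pmeet = Pmeet :=
    hP.isIdempotentElem.mul_eq_right_of_range_le (hm3 ▸ inf_le_left)
  have hQE : Q * Pmeet = Pmeet :=
    hQ.isIdempotentElem.mul_eq_right_of_range_le (hm3 ▸ inf_le_right)
  have hP' : IsStarProjection (P - Pmeet) := hE.sub_of_mul_eq_right hP hPE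
  have hQ' : IsStarProjection (Q - Pmeet) := hE.sub_of_mul_eq_right hQ hQE
  rw [hE.mul_pow_succ_sub hP2 hQ2 hPE hQE, hP'.norm_mul_pow_succ hQ',
    hP'.norm_mul_eq_cosDixmierAngle hQ', hP.range_sub hE hPE, hQ.range_sub hE hQE, hm3,
    show 2 * (n + 1) - 1 = 2 * n + 1 by omega]
  -- `cosAngle` is the Dixmier cosine of the parts of the ranges orthogonal to their intersection
  rfl
end

section
/- Let A ∈ L(ℓ², H) have closed range and let D be a positive invertible operator on ℓ² which is diagonal in the canonical basis. Then χ_D(A) := D^{−1/2}(A D^{−1/2})† is a generalized inverse of A (i.e., A χ_D(A) A = A and χ_D(A) A χ_D(A) = χ_D(A)), and χ_D(A)·A is the projection onto N(A)^{⊥_D} along N(A), which is orthogonal with respect to the inner product ⟨x,y⟩_D = ⟨Dx, y⟩. -/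
open ContinuousLinearMap
open scoped Classical

variable {H : Type*} [NormedAddCommGroup H] [InnerProductSpace ℂ H] [CompleteSpace H]

/-- The Moore–Penrose pseudoinverse (via choice; `0` if it does not exist). -/
noncomputable def pinv {E F : Type*} [NormedAddCommGroup E] [InnerProductSpace ℂ E]
    [CompleteSpace E] [NormedAddCommGroup F] [InnerProductSpace ℂ F] [CompleteSpace F]
    (A : E →L[ℂ] F) : F →L[ℂ] E :=
  if h : ∃ B : F →L[ℂ] E, A ∘L B ∘L A = A ∧ B ∘L A ∘L B = B ∧
      IsSelfAdjoint (A ∘L B) ∧ IsSelfAdjoint (B ∘L A)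
  then h.choose else 0

/-!
Put `T = D^{-1/2}`, `S = A T` and `U = T D = D^{1/2}`. Then `A = S U`, `U T = 1` and
`⟨D x, y⟩ = ⟨U x, U y⟩`, so `S` has the closed range of `A`, the identities `S S† S = S` and
`S† S S† = S†` transfer to `χ_D(A) = T S†`, and `χ_D(A) A = T (S† S) U` is the conjugate by `U` of
the orthogonal projection `S† S`; conjugating by `U` turns `⟨·, ·⟩`-symmetry into
`⟨D ·, ·⟩`-symmetry, and a `⟨D ·, ·⟩`-symmetric idempotent is the `D`-orthogonal projection onto
its range.
-/

section MoorePenrose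

variable {𝕜 E F : Type*} [RCLike 𝕜] [NormedAddCommGroup E] [InnerProductSpace 𝕜 E]
  [CompleteSpace E] [NormedAddCommGroup F] [InnerProductSpace 𝕜 F]

theorem map_starProjection_orthogonal_ker (A : E →L[𝕜] F) (x : E) :
    A ((LinearMap.ker (A : E →ₗ[𝕜] F))ᗮ.starProjection x) = A x := by
  have : CompleteSpace (LinearMap.ker (A : E →ₗ[𝕜] F)) := A.isClosed_ker.completeSpace_coe
  have hker : A ((LinearMap.ker (A : E →ₗ[𝕜] F)).starProjection x) = 0 :=
    (LinearMap.ker (A : E →ₗ[𝕜] F)).starProjection_apply_mem x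
  conv_rhs => rw [← (LinearMap.ker (A : E →ₗ[𝕜] F)).starProjection_add_starProjection_orthogonal x]
  rw [map_add, hker, zero_add]

/-- `B` inverts the bijection `A : N(A)ᗮ → R(A)`, bounded by the open mapping theorem, and
vanishes on `R(A)ᗮ`. -/
theorem exists_comp_eq_starProjection_range (A : E →L[𝕜] F)
    [CompleteSpace (LinearMap.range (A : E →ₗ[𝕜] F))] :
    ∃ B : F →L[𝕜] E, A ∘L B = (LinearMap.range (A : E →ₗ[𝕜] F)).starProjection ∧
      B ∘L A = (LinearMap.ker (A : E →ₗ[𝕜] F))ᗮ.starProjection ∧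
      (LinearMap.ker (A : E →ₗ[𝕜] F))ᗮ.starProjection ∘L B = B := by
  set K := (LinearMap.ker (A : E →ₗ[𝕜] F))ᗮ
  set R := LinearMap.range (A : E →ₗ[𝕜] F)
  let A' : K →L[𝕜] R :=
    (A ∘L K.subtypeL).codRestrict R fun x => LinearMap.mem_range_self (A : E →ₗ[𝕜] F) x
  have hinj : LinearMap.ker (A' : K →ₗ[𝕜] R) = ⊥ :=
    (Submodule.eq_bot_iff _).2 fun x hx =>
      Subtype.ext (inner_self_eq_zero.1 (x.2 x (congrArg Subtype.val hx)))
  have hsurj : LinearMap.range (A' : K →ₗ[𝕜] R) = ⊤ := by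
    refine Submodule.eq_top_iff'.2 fun ⟨_, x, rfl⟩ =>
      ⟨⟨K.starProjection x, K.starProjection_apply_mem x⟩, ?_⟩
    exact Subtype.ext (map_starProjection_orthogonal_ker A x)
  let e := ContinuousLinearEquiv.ofBijective A' hinj hsurj
  refine ⟨K.subtypeL ∘L (e.symm : R →L[𝕜] K) ∘L R.orthogonalProjectionOnto, ?_, ?_, ?_⟩
  · ext y
    exact congrArg Subtype.val (e.apply_symm_apply (R.orthogonalProjectionOnto y))
  · ext x
    have hx : R.orthogonalProjectionOnto (A x) =
        e ⟨K.starProjection x, K.starProjection_apply_mem x⟩ :=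
      Subtype.ext ((Submodule.starProjection_eq_self_iff.2
        (LinearMap.mem_range_self (A : E →ₗ[𝕜] F) x)).trans
          (map_starProjection_orthogonal_ker A x).symm)
    show ((e.symm (R.orthogonalProjectionOnto (A x)) : K) : E) = K.starProjection x
    rw [hx, e.symm_apply_apply]
  · ext y
    exact Submodule.starProjection_eq_self_iff.2 (e.symm (R.orthogonalProjectionOnto y)).2

variable [CompleteSpace F]

def IsMoorePenroseInverse (A : E →L[𝕜] F) (B : F →L[𝕜] E) : Prop :=
  A ∘L B ∘L A = A ∧ B ∘L A ∘L B = B ∧ IsSelfAdjoint (A ∘L B) ∧ IsSelfAdjoint (B ∘L A)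

theorem exists_isMoorePenroseInverse (A : E →L[𝕜] F)
    (hA : IsClosed (LinearMap.range (A : E →ₗ[𝕜] F) : Set F)) :
    ∃ B, IsMoorePenroseInverse A B := by
  have : CompleteSpace (LinearMap.range (A : E →ₗ[𝕜] F)) := hA.completeSpace_coe
  obtain ⟨B, hAB, hBA, hPB⟩ := exists_comp_eq_starProjection_range A
  refine ⟨B, ?_, ?_, hAB ▸ isSelfAdjoint_starProjection _, hBA ▸ isSelfAdjoint_starProjection _⟩
  · rw [← comp_assoc, hAB]
    ext x
    exact Submodule.starProjection_eq_self_iff.2 (LinearMap.mem_range_self (A : E →ₗ[𝕜] F) x)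
  · rw [← comp_assoc, hBA, hPB]

end MoorePenrose

theorem pinv_isMoorePenroseInverse {E F : Type*} [NormedAddCommGroup E] [InnerProductSpace ℂ E]
    [CompleteSpace E] [NormedAddCommGroup F] [InnerProductSpace ℂ F] [CompleteSpace F]
    (A : E →L[ℂ] F) (hA : IsClosed (LinearMap.range (A : E →ₗ[ℂ] F) : Set F)) :
    IsMoorePenroseInverse A (pinv A) := by
  unfold pinv
  split_ifs with h
  · exact h.choose_spec
  · exact absurd (exists_isMoorePenroseInverse A hA) h

section GeneralizedInverse

variable {R E F : Type*} [Semiring R] [TopologicalSpace E] [AddCommMonoid E] [Module R E]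
  [TopologicalSpace F] [AddCommMonoid F] [Module R F]

def IsGeneralizedInverse (A : E →L[R] F) (B : F →L[R] E) : Prop :=
  A ∘L B ∘L A = A ∧ B ∘L A ∘L B = B

theorem IsGeneralizedInverse.of_comp_right {A : E →L[R] F} {T U : E →L[R] E} {B : F →L[R] E}
    (h : IsGeneralizedInverse (A ∘L T) B) (hU : (A ∘L T) ∘L U = A) :
    IsGeneralizedInverse A (T ∘L B) := by
  constructor
  · calc A ∘L (T ∘L B) ∘L A = A ∘L (T ∘L B) ∘L ((A ∘L T) ∘L U) := by rw [hU]
      _ = ((A ∘L T) ∘L B ∘L (A ∘L T)) ∘L U := rfl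
      _ = A := by rw [h.1, hU]
  · calc (T ∘L B) ∘L A ∘L (T ∘L B) = T ∘L (B ∘L (A ∘L T) ∘L B) := rfl
      _ = T ∘L B := by rw [h.2]

theorem range_comp_eq_of_comp_comp_eq {A : E →L[R] F} {T U : E →L[R] E}
    (hU : (A ∘L T) ∘L U = A) :
    LinearMap.range ((A ∘L T : E →L[R] F) : E →ₗ[R] F) = LinearMap.range (A : E →ₗ[R] F) := by
  refine le_antisymm (LinearMap.range_comp_le_range _ _) ?_
  calc LinearMap.range (A : E →ₗ[R] F)
      = LinearMap.range (((A ∘L T) ∘L U : E →L[R] F) : E →ₗ[R] F) := by rw [hU]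
    _ ≤ _ := LinearMap.range_comp_le_range _ _

theorem comp_idempotent_of_comp_comp_eq_self {A : E →L[R] F} {B : F →L[R] E}
    (h : A ∘L B ∘L A = A) : (B ∘L A) ∘L (B ∘L A) = B ∘L A :=
  congrArg (B ∘L ·) h

theorem ker_comp_eq_of_comp_comp_eq_self {A : E →L[R] F} {B : F →L[R] E}
    (h : A ∘L B ∘L A = A) :
    LinearMap.ker ((B ∘L A : E →L[R] E) : E →ₗ[R] E) = LinearMap.ker (A : E →ₗ[R] F) := by
  ext x
  refine ⟨fun hx => ?_, fun hx => ?_⟩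
  · rw [LinearMap.mem_ker, ← h]
    exact congrArg A hx |>.trans (map_zero A)
  · show B (A x) = 0
    rw [show A x = 0 from hx, map_zero]

end GeneralizedInverse

theorem mul_mul_eq_one_of_mul_self {M : Type*} [Monoid M] {t d : M}
    (hl : d * (t * t) = 1) (hr : t * t * d = 1) : t * d * t = 1 := by
  have hcomm : d * t = t * d :=
    left_inv_eq_right_inv (by rw [mul_assoc, hl]) (by rw [← mul_assoc, hr])
  rw [← hcomm, mul_assoc, hl]

section WeightedInner

open scoped InnerProductSpace

variable {𝕜 E : Type*} [RCLike 𝕜] [NormedAddCommGroup E] [InnerProductSpace 𝕜 E]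

theorem range_eq_setOf_inner_map_eq_zero_of_idempotent {P D : E →L[𝕜] E} (hP : P ∘L P = P)
    (hD : ∀ w, ⟪D w, w⟫_𝕜 = 0 → w = 0) (hsym : ∀ x y, ⟪D (P x), y⟫_𝕜 = ⟪D x, P y⟫_𝕜) :
    Set.range P = {z | ∀ x, P x = 0 → ⟪D x, z⟫_𝕜 = 0} := by
  ext z
  refine ⟨?_, fun hz => ⟨z, ?_⟩⟩
  · rintro ⟨v, rfl⟩ x hx
    rw [← hsym, hx, map_zero, inner_zero_left]
  · have hw : P (z - P z) = 0 := by
      rw [map_sub, ← comp_apply, hP, sub_self]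
    have hwz : ⟪D (z - P z), P z⟫_𝕜 = 0 := by
      rw [← hsym, hw, map_zero, inner_zero_left]
    have hww : ⟪D (z - P z), z - P z⟫_𝕜 = 0 := by
      rw [inner_sub_right, hz _ hw, hwz, sub_zero]
    exact (sub_eq_zero.1 (hD _ hww)).symm

variable {T D : E →L[𝕜] E}

theorem inner_map_eq_inner_comp_map (hT : (T : E →ₗ[𝕜] E).IsSymmetric) (hTTD : T ∘L T ∘L D = 1)
    (x y : E) : ⟪D x, y⟫_𝕜 = ⟪(T ∘L D) x, (T ∘L D) y⟫_𝕜 := by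
  have hy : T (T (D y)) = y := DFunLike.congr_fun hTTD y
  calc ⟪D x, y⟫_𝕜 = ⟪D x, T (T (D y))⟫_𝕜 := by rw [hy]
    _ = ⟪T (D x), T (D y)⟫_𝕜 := (hT _ _).symm

theorem eq_zero_of_inner_map_self_eq_zero (hT : (T : E →ₗ[𝕜] E).IsSymmetric)
    (hTTD : T ∘L T ∘L D = 1) (w : E) (hw : ⟪D w, w⟫_𝕜 = 0) : w = 0 := by
  rw [inner_map_eq_inner_comp_map hT hTTD, inner_self_eq_zero] at hw
  calc w = T ((T ∘L D) w) := (DFunLike.congr_fun hTTD w).symm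
    _ = 0 := by rw [hw, map_zero]

theorem inner_map_conj_symm (hT : (T : E →ₗ[𝕜] E).IsSymmetric) (hTTD : T ∘L T ∘L D = 1)
    {Q : E →L[𝕜] E} (hQ : (Q : E →ₗ[𝕜] E).IsSymmetric)
    (hTDT : (T ∘L D) ∘L T = 1) (x y : E) :
    ⟪D ((T ∘L Q ∘L (T ∘L D)) x), y⟫_𝕜 = ⟪D x, (T ∘L Q ∘L (T ∘L D)) y⟫_𝕜 := by
  have hconj : ∀ v, (T ∘L D) ((T ∘L Q ∘L (T ∘L D)) v) = Q ((T ∘L D) v) :=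
    fun v => DFunLike.congr_fun hTDT (Q ((T ∘L D) v))
  rw [inner_map_eq_inner_comp_map hT hTTD, inner_map_eq_inner_comp_map hT hTTD x, hconj, hconj]
  exact hQ _ _

end WeightedInner

theorem stmt17_general (A : lp (fun _ : ℕ => ℂ) 2 →L[ℂ] H)
    (hA : IsClosed ((LinearMap.range (A : lp (fun _ : ℕ => ℂ) 2 →ₗ[ℂ] H) : Submodule ℂ H) : Set H))
    (D Dinv Droot : lp (fun _ : ℕ => ℂ) 2 →L[ℂ] lp (fun _ : ℕ => ℂ) 2)
    (hDinv1 : D ∘L Dinv = 1) (hDinv2 : Dinv ∘L D = 1)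
    (hroot : Droot.IsPositive) (hroot2 : Droot ∘L Droot = Dinv)
    (χ : H →L[ℂ] lp (fun _ : ℕ => ℂ) 2) (hχ : χ = Droot ∘L pinv (A ∘L Droot)) :
    A ∘L χ ∘L A = A
    ∧ χ ∘L A ∘L χ = χ
    ∧ (χ ∘L A) ∘L (χ ∘L A) = χ ∘L A
    ∧ LinearMap.ker ((χ ∘L A : lp (fun _ : ℕ => ℂ) 2 →L[ℂ] lp (fun _ : ℕ => ℂ) 2) : lp (fun _ : ℕ => ℂ) 2 →ₗ[ℂ] lp (fun _ : ℕ => ℂ) 2) = LinearMap.ker (A : lp (fun _ : ℕ => ℂ) 2 →ₗ[ℂ] H)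
    ∧ Set.range ⇑(χ ∘L A)
        = {z : lp (fun _ : ℕ => ℂ) 2 | ∀ x, A x = 0 → (inner ℂ (D x) z : ℂ) = 0}
    ∧ (∀ x y : lp (fun _ : ℕ => ℂ) 2,
        (inner ℂ (D ((χ ∘L A) x)) y : ℂ) = (inner ℂ (D x) ((χ ∘L A) y) : ℂ)) := by
  have hTTD : Droot ∘L Droot ∘L D = 1 := by rw [← comp_assoc, hroot2, hDinv2]
  have hTDT : (Droot ∘L D) ∘L Droot = 1 :=
    mul_mul_eq_one_of_mul_self (show D ∘L Droot ∘L Droot = 1 by rw [hroot2, hDinv1]) hTTD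
  have hAS : (A ∘L Droot) ∘L (Droot ∘L D) = A := by
    rw [comp_assoc, hTTD]
    rfl
  obtain ⟨hS₁, hS₂, -, hQ⟩ :=
    pinv_isMoorePenroseInverse (A ∘L Droot) (range_comp_eq_of_comp_comp_eq hAS ▸ hA)
  have hgen : IsGeneralizedInverse A χ := hχ ▸ IsGeneralizedInverse.of_comp_right ⟨hS₁, hS₂⟩ hAS
  have hP : χ ∘L A = Droot ∘L (pinv (A ∘L Droot) ∘L (A ∘L Droot)) ∘L (Droot ∘L D) := by
    rw [hχ]
    exact congrArg (fun M => Droot ∘L pinv (A ∘L Droot) ∘L M) hAS.symm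
  have hsym : ∀ x y, inner ℂ (D ((χ ∘L A) x)) y = inner ℂ (D x) ((χ ∘L A) y) :=
    hP ▸ inner_map_conj_symm hroot.isSymmetric hTTD (isSelfAdjoint_iff_isSymmetric.1 hQ) hTDT
  have hidem := comp_idempotent_of_comp_comp_eq_self hgen.1
  have hker := ker_comp_eq_of_comp_comp_eq_self hgen.1
  refine ⟨hgen.1, hgen.2, hidem, hker, ?_, hsym⟩
  rw [range_eq_setOf_inner_map_eq_zero_of_idempotent hidem
    (eq_zero_of_inner_map_self_eq_zero hroot.isSymmetric hTTD) hsym]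
  have hker' : ∀ x, (χ ∘L A) x = 0 ↔ A x = 0 := fun x => SetLike.ext_iff.1 hker x
  simp only [hker']

/-- For `A` with closed range and `D` positive, invertible and diagonal,
`χ_D(A) = D^{-1/2}(A D^{-1/2})†` is a generalized inverse of `A`, and `χ_D(A)·A` is the
projection onto `N(A)^{⊥_D}` along `N(A)`, orthogonal for the inner product `⟨Dx, y⟩`. -/
theorem stmt17 (A : lp (fun _ : ℕ => ℂ) 2 →L[ℂ] H)
    (hA : IsClosed ((LinearMap.range (A : lp (fun _ : ℕ => ℂ) 2 →ₗ[ℂ] H) : Submodule ℂ H) : Set H))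
    (D Dinv Droot : lp (fun _ : ℕ => ℂ) 2 →L[ℂ] lp (fun _ : ℕ => ℂ) 2)
    (hDpos : D.IsPositive)
    (hDdiag : ∀ n : ℕ, ∃ d : ℂ, D (lp.single 2 n 1) = d • lp.single 2 n 1)
    (hDinv1 : D ∘L Dinv = 1) (hDinv2 : Dinv ∘L D = 1)
    (hroot : Droot.IsPositive) (hroot2 : Droot ∘L Droot = Dinv)
    (χ : H →L[ℂ] lp (fun _ : ℕ => ℂ) 2) (hχ : χ = Droot ∘L pinv (A ∘L Droot)) :
    A ∘L χ ∘L A = A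
    ∧ χ ∘L A ∘L χ = χ
    ∧ (χ ∘L A) ∘L (χ ∘L A) = χ ∘L A
    ∧ LinearMap.ker ((χ ∘L A : lp (fun _ : ℕ => ℂ) 2 →L[ℂ] lp (fun _ : ℕ => ℂ) 2) : lp (fun _ : ℕ => ℂ) 2 →ₗ[ℂ] lp (fun _ : ℕ => ℂ) 2) = LinearMap.ker (A : lp (fun _ : ℕ => ℂ) 2 →ₗ[ℂ] H)
    ∧ Set.range ⇑(χ ∘L A)
        = {z : lp (fun _ : ℕ => ℂ) 2 | ∀ x, A x = 0 → (inner ℂ (D x) z : ℂ) = 0}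
    ∧ (∀ x y : lp (fun _ : ℕ => ℂ) 2,
        (inner ℂ (D ((χ ∘L A) x)) y : ℂ) = (inner ℂ (D x) ((χ ∘L A) y) : ℂ)) :=
  stmt17_general A hA D Dinv Droot hDinv1 hDinv2 hroot hroot2 χ hχ
end
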